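/- Let n ≥ 1 and let K : (0,∞) × ℝⁿ × ℝⁿ → ℝ be the Mehler kernel K(t,x,y) = π^{−n/2}(1 − e^{−2t})^{−n/2} · exp( −[ ((|x|² + |y|²)/2)(1 + e^{−2t}) − 2 e^{−t} x·y ] / (1 − e^{−2t}) ). Then for every bounded continuous function f : ℝⁿ → ℝ and every x ∈ ℝⁿ, ∫_{ℝⁿ} K(t,x,y) f(y) dy converges to f(x) as t → 0⁺. -/

import Mathlib

/-
Substituting `y = e^{-t} x + √(1 - e^{-2t}) z` turns `∫ K(t,x,y) f(y) dy` into
`∫ π^{-n/2} e^{-|z|²} e^{(|y|² - |x|²)/2} f(y) dz`: the Jacobian `(1 - e^{-2t})^{n/2}` cancels the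
normalisation of the kernel, and the exponent becomes `-|z|² + (|y|² - |x|²)/2`. For small `t`
the new integrand is dominated by `C e^{-|z|²/2}` and tends pointwise to `π^{-n/2} e^{-|z|²} f(x)`,
whose integral is `f(x)`; dominated convergence concludes.
-/

open Real MeasureTheory Filter

/-- The Mehler kernel of the harmonic oscillator
`L = (1/2) ∑ i (-∂²/∂xᵢ² + xᵢ² - 1)` on `ℝⁿ`. -/
noncomputable def mehlerKernel (n : ℕ) (t : ℝ) (x y : Fin n → ℝ) : ℝ :=
  Real.pi ^ (-(n : ℝ) / 2) * (1 - Real.exp (-(2 * t))) ^ (-(n : ℝ) / 2) *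
    Real.exp (-((((∑ i, x i ^ 2) + ∑ i, y i ^ 2) / 2) * (1 + Real.exp (-(2 * t)))
        - 2 * Real.exp (-t) * ∑ i, x i * y i) / (1 - Real.exp (-(2 * t))))

open Topology Module

section Gaussian

variable {ι : Type*} [Fintype ι]

lemma integral_exp_neg_sum_sq :
    ∫ z : ι → ℝ, exp (-∑ i, z i ^ 2) = π ^ ((Fintype.card ι : ℝ) / 2) := by
  simp_rw [← Finset.sum_neg_distrib, exp_sum]
  rw [integral_fintype_prod_volume_eq_pow (fun x : ℝ => exp (-x ^ 2))]
  have h1 : ∫ x : ℝ, exp (-x ^ 2) = √π := by simpa using integral_gaussian 1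
  rw [h1, sqrt_eq_rpow, ← rpow_natCast, ← rpow_mul pi_nonneg, one_div_mul_eq_div]

lemma integrable_exp_neg_mul_sum_sq {b : ℝ} (hb : 0 < b) :
    Integrable (fun z : ι → ℝ => exp (-b * ∑ i, z i ^ 2)) := by
  simp_rw [Finset.mul_sum, exp_sum]
  exact Integrable.fintype_prod (f := fun _ x => exp (-b * x ^ 2))
    fun _ => integrable_exp_neg_mul_sq hb

end Gaussian

lemma integral_comp_add_smul {E F : Type*} [NormedAddCommGroup E] [NormedSpace ℝ E]
    [MeasurableSpace E] [BorelSpace E] [FiniteDimensional ℝ E] (μ : Measure E)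
    [μ.IsAddHaarMeasure] [NormedAddCommGroup F] [NormedSpace ℝ F] (g : E → F) (a : E) (r : ℝ) :
    ∫ z, g (a + r • z) ∂μ = |(r ^ finrank ℝ E)⁻¹| • ∫ y, g y ∂μ := by
  rw [Measure.integral_comp_smul μ (fun w => g (a + w)), integral_add_left_eq_self]

lemma exp_neg_two_mul (t : ℝ) : exp (-(2 * t)) = exp (-t) ^ 2 := by
  rw [← exp_nat_mul]; ring_nf

section Mehler

variable {n : ℕ}

noncomputable def mehlerShift (t : ℝ) (x z : Fin n → ℝ) : Fin n → ℝ :=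
  exp (-t) • x + √(1 - exp (-(2 * t))) • z

lemma mehlerShift_apply (t : ℝ) (x z : Fin n → ℝ) (i : Fin n) :
    mehlerShift t x z i = exp (-t) * x i + √(1 - exp (-(2 * t))) * z i := rfl

lemma mehlerShift_zero (x z : Fin n → ℝ) : mehlerShift 0 x z = x := by
  simp [mehlerShift]

/-- The integrand of `∫ y, mehlerKernel n t x y * f y` in the variable `z` of
`y = mehlerShift t x z`. -/
noncomputable def mehlerIntegrand (f : (Fin n → ℝ) → ℝ) (t : ℝ) (x z : Fin n → ℝ) : ℝ :=
  π ^ (-(n : ℝ) / 2) * exp (-∑ i, z i ^ 2) *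
    exp ((∑ i, mehlerShift t x z i ^ 2 - ∑ i, x i ^ 2) / 2) * f (mehlerShift t x z)

lemma pow_mul_mehlerKernel_mehlerShift {t : ℝ} (ht : 0 < t) (x z : Fin n → ℝ) :
    √(1 - exp (-(2 * t))) ^ n * mehlerKernel n t x (mehlerShift t x z) =
      π ^ (-(n : ℝ) / 2) * exp (-∑ i, z i ^ 2) *
        exp ((∑ i, mehlerShift t x z i ^ 2 - ∑ i, x i ^ 2) / 2) := by
  set s := exp (-t)
  set r := √(1 - exp (-(2 * t)))
  have hs : s ^ 2 < 1 := by rw [← exp_neg_two_mul]; exact exp_lt_one_iff.mpr (by linarith)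
  have hr2 : r ^ 2 = 1 - s ^ 2 := by
    rw [sq_sqrt (by rw [exp_neg_two_mul]; linarith), exp_neg_two_mul]
  have hr : 0 < r := sqrt_pos.2 (by rw [exp_neg_two_mul]; linarith)
  have hnorm : r ^ n * (1 - exp (-(2 * t))) ^ (-(n : ℝ) / 2) = 1 := by
    rw [← sq_sqrt (by rw [exp_neg_two_mul]; linarith : 0 ≤ 1 - exp (-(2 * t))), ← rpow_natCast r 2,
      ← rpow_mul hr.le, show ((2 : ℕ) : ℝ) * (-(n : ℝ) / 2) = -n by push_cast; ring,
      rpow_neg hr.le, rpow_natCast, mul_inv_cancel₀ (by positivity)]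
  set A := ∑ i, x i ^ 2
  set B := ∑ i, x i * z i
  set C := ∑ i, z i ^ 2
  have hY : ∑ i, mehlerShift t x z i ^ 2 = s ^ 2 * A + 2 * s * r * B + r ^ 2 * C := by
    simp only [mehlerShift_apply, A, B, C, Finset.mul_sum, ← Finset.sum_add_distrib]
    exact Finset.sum_congr rfl fun i _ => by ring
  have hXY : ∑ i, x i * mehlerShift t x z i = s * A + r * B := by
    simp only [mehlerShift_apply, A, B, Finset.mul_sum, ← Finset.sum_add_distrib]
    exact Finset.sum_congr rfl fun i _ => by ring
  have hexp : -((A + ∑ i, mehlerShift t x z i ^ 2) / 2 * (1 + exp (-(2 * t))) -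
      2 * s * ∑ i, x i * mehlerShift t x z i) / (1 - exp (-(2 * t))) =
      -C + (∑ i, mehlerShift t x z i ^ 2 - A) / 2 := by
    rw [exp_neg_two_mul, hXY, div_eq_iff (by linarith), hY]
    linear_combination (-C) * hr2
  rw [mehlerKernel, hexp, exp_add]
  linear_combination
    π ^ (-(n : ℝ) / 2) * exp (-C) * exp ((∑ i, mehlerShift t x z i ^ 2 - A) / 2) * hnorm

lemma integral_mehlerKernel_mul_eq {t : ℝ} (ht : 0 < t) (f : (Fin n → ℝ) → ℝ) (x : Fin n → ℝ) :
    ∫ y, mehlerKernel n t x y * f y = ∫ z, mehlerIntegrand f t x z := by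
  set r := √(1 - exp (-(2 * t)))
  have hr : 0 < r := sqrt_pos.2 (sub_pos.2 (exp_lt_one_iff.2 (by linarith)))
  have hcov := integral_comp_add_smul volume (fun y => mehlerKernel n t x y * f y)
    (exp (-t) • x) r
  rw [finrank_fin_fun, abs_of_pos (inv_pos.2 (pow_pos hr n)), smul_eq_mul] at hcov
  have hint : mehlerIntegrand f t x =
      fun z => r ^ n * (mehlerKernel n t x (mehlerShift t x z) * f (mehlerShift t x z)) := by
    funext z
    rw [mehlerIntegrand, ← mul_assoc, pow_mul_mehlerKernel_mehlerShift ht]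
  rw [hint, integral_const_mul]
  unfold mehlerShift
  rw [hcov, ← mul_assoc, mul_inv_cancel₀ (by positivity), one_mul]

lemma integral_mehlerIntegrand_zero (f : (Fin n → ℝ) → ℝ) (x : Fin n → ℝ) :
    ∫ z, mehlerIntegrand f 0 x z = f x := by
  simp only [mehlerIntegrand, mehlerShift_zero, sub_self, zero_div, exp_zero, mul_one]
  rw [integral_mul_const, integral_const_mul, integral_exp_neg_sum_sq, Fintype.card_fin,
    ← rpow_add pi_pos, neg_div, neg_add_cancel, rpow_zero, one_mul]

lemma continuous_mehlerIntegrand {f : (Fin n → ℝ) → ℝ} (hf : Continuous f) (x : Fin n → ℝ) :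
    Continuous fun p : ℝ × (Fin n → ℝ) => mehlerIntegrand f p.1 x p.2 := by
  unfold mehlerIntegrand mehlerShift
  fun_prop

lemma sum_sq_mehlerShift_le {t : ℝ} (ht : 0 ≤ t) (ht' : 1 / 2 ≤ exp (-(2 * t)))
    (x z : Fin n → ℝ) :
    ∑ i, mehlerShift t x z i ^ 2 ≤ 2 * ∑ i, x i ^ 2 + ∑ i, z i ^ 2 := by
  have hs : exp (-t) ^ 2 ≤ 1 := pow_le_one₀ (exp_pos _).le (exp_le_one_iff.2 (by linarith))
  have hr : √(1 - exp (-(2 * t))) ^ 2 ≤ 1 / 2 := by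
    rw [sq_sqrt (sub_nonneg.2 (exp_le_one_iff.2 (by linarith)))]; linarith
  rw [Finset.mul_sum, ← Finset.sum_add_distrib]
  refine Finset.sum_le_sum fun i _ => ?_
  rw [mehlerShift_apply]
  refine add_sq_le.trans ?_
  rw [mul_pow, mul_pow]
  nlinarith [sq_nonneg (x i), sq_nonneg (z i)]

lemma abs_mehlerIntegrand_le {f : (Fin n → ℝ) → ℝ} {M : ℝ} (hM : ∀ y, |f y| ≤ M) {t : ℝ}
    (ht : 0 ≤ t) (ht' : 1 / 2 ≤ exp (-(2 * t))) (x z : Fin n → ℝ) :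
    |mehlerIntegrand f t x z| ≤
      π ^ (-(n : ℝ) / 2) * M * exp ((∑ i, x i ^ 2) / 2) * exp (-(1 / 2) * ∑ i, z i ^ 2) := by
  have hM0 : 0 ≤ M := (abs_nonneg _).trans (hM 0)
  have hY := sum_sq_mehlerShift_le ht ht' x z
  rw [mehlerIntegrand, abs_mul, abs_of_pos (by positivity)]
  calc _ ≤ π ^ (-(n : ℝ) / 2) * exp (-∑ i, z i ^ 2) *
          exp ((∑ i, mehlerShift t x z i ^ 2 - ∑ i, x i ^ 2) / 2) * M := by gcongr; exact hM _
    _ = π ^ (-(n : ℝ) / 2) * M *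
          exp (-∑ i, z i ^ 2 + (∑ i, mehlerShift t x z i ^ 2 - ∑ i, x i ^ 2) / 2) := by
      rw [exp_add]; ring
    _ ≤ π ^ (-(n : ℝ) / 2) * M * exp ((∑ i, x i ^ 2) / 2 + -(1 / 2) * ∑ i, z i ^ 2) :=
      mul_le_mul_of_nonneg_left (exp_le_exp.2 (by linarith)) (by positivity)
    _ = _ := by rw [exp_add]; ring

lemma tendsto_integral_mehlerIntegrand {f : (Fin n → ℝ) → ℝ} (hf : Continuous f) {M : ℝ}
    (hM : ∀ y, |f y| ≤ M) (x : Fin n → ℝ) :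
    Tendsto (fun t => ∫ z, mehlerIntegrand f t x z) (𝓝[>] 0) (𝓝 (f x)) := by
  rw [← integral_mehlerIntegrand_zero f x]
  have hcont := continuous_mehlerIntegrand hf x
  have hsmall : ∀ᶠ t in 𝓝 (0 : ℝ), 1 / 2 ≤ exp (-(2 * t)) :=
    ((by fun_prop : Continuous fun t : ℝ => exp (-(2 * t))).tendsto' 0 1 (by simp)).eventually
      (eventually_ge_nhds (by norm_num))
  refine tendsto_integral_filter_of_dominated_convergence _
    (.of_forall fun t => (hcont.comp (Continuous.prodMk_right t)).aestronglyMeasurable)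
    ?_ ((integrable_exp_neg_mul_sum_sq (by norm_num : (0 : ℝ) < 1 / 2)).const_mul
      (π ^ (-(n : ℝ) / 2) * M * exp ((∑ i, x i ^ 2) / 2)))
    (.of_forall fun z => ?_)
  · filter_upwards [self_mem_nhdsWithin, nhdsWithin_le_nhds hsmall] with t ht ht'
    exact .of_forall fun z => abs_mehlerIntegrand_le hM (le_of_lt ht) ht' x z
  · exact ((hcont.comp (Continuous.prodMk_left z)).tendsto 0).mono_left nhdsWithin_le_nhds

end Mehler

theorem mehlerKernel_tendsto_id_general (n : ℕ)
    (f : (Fin n → ℝ) → ℝ) (hf : Continuous f) (M : ℝ) (hM : ∀ y, |f y| ≤ M)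
    (x : Fin n → ℝ) :
    Tendsto (fun t => ∫ y : Fin n → ℝ, mehlerKernel n t x y * f y)
      (nhdsWithin 0 (Set.Ioi 0)) (nhds (f x)) := by
  refine (tendsto_integral_mehlerIntegrand hf hM x).congr' ?_
  filter_upwards [self_mem_nhdsWithin] with t ht
  exact (integral_mehlerKernel_mul_eq ht f x).symm

theorem mehlerKernel_tendsto_id (n : ℕ) (hn : 1 ≤ n)
    (f : (Fin n → ℝ) → ℝ) (hf : Continuous f) (M : ℝ) (hM : ∀ y, |f y| ≤ M)
    (x : Fin n → ℝ) :
    Tendsto (fun t => ∫ y : Fin n → ℝ, mehlerKernel n t x y * f y)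
      (nhdsWithin 0 (Set.Ioi 0)) (nhds (f x)) :=
  mehlerKernel_tendsto_id_general n f hf M hM x
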